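/- Let $WE$ be a random variable with Weibull density $f_{WE}(x) = \frac{1}{2}x^{-1/2}e^{-\sqrt{x}}$ for $x > 0$, and let $N$ be an independent standard Gaussian random variable. Then for every $\theta \neq 0$, $\mathbb{E}\big[e^{\theta \cdot WE \cdot N}\big] = +\infty$, i.e., the random variable $WE \cdot N$ is heavy-tailed in the sense that its Laplace transform is infinite on $\mathbb{R}\setminus\{0\}$. -/
import Mathlib
open MeasureTheory ProbabilityTheory Real
open scoped ProbabilityTheory ENNReal

lemma inner_gauss_lb (t : ℝ) :
    ENNReal.ofReal (Real.exp (t^2/2 - |t| - 1/2) / Real.sqrt (2*π)) ≤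
      ∫⁻ y, ENNReal.ofReal (Real.exp (t*y)) ∂(gaussianReal 0 1) := by
  have hm : Measurable fun y : ℝ => ENNReal.ofReal (Real.exp (t*y)) := by fun_prop
  rw [gaussianReal_of_var_ne_zero 0 one_ne_zero,
    lintegral_withDensity_eq_lintegral_mul _ (measurable_gaussianPDF 0 1)
      hm]
  set a : ℝ := if 0 ≤ t then t else t - 1 with ha
  have key : ∀ y ∈ Set.Icc a (a+1),
      ENNReal.ofReal (Real.exp (t^2/2 - |t| - 1/2) / Real.sqrt (2*π)) ≤
        (gaussianPDF 0 1 * fun y => ENNReal.ofReal (Real.exp (t*y))) y := by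
    intro y hy
    have hty : t^2 ≤ t*y := by
      rcases le_or_gt 0 t with h | h
      · simp only [ha, if_pos h] at hy; nlinarith [hy.1]
      · simp only [ha, if_neg (not_le.mpr h)] at hy; nlinarith [hy.2]
    have hy2 : y^2 ≤ (|t|+1)^2 := by
      have hub : y ≤ |t| + 1 := by
        rcases le_or_gt 0 t with h | h
        · simp only [ha, if_pos h] at hy; rw [abs_of_nonneg h]; linarith [hy.2]
        · simp only [ha, if_neg (not_le.mpr h)] at hy; rw [abs_of_neg h]; linarith [hy.2]
      have hlb : -(|t| + 1) ≤ y := by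
        rcases le_or_gt 0 t with h | h
        · simp only [ha, if_pos h] at hy; rw [abs_of_nonneg h]; linarith [hy.1]
        · simp only [ha, if_neg (not_le.mpr h)] at hy; rw [abs_of_neg h]; linarith [hy.1]
      nlinarith [abs_nonneg t, sq_abs t]
    simp only [Pi.mul_apply, gaussianPDF]
    rw [← ENNReal.ofReal_mul (gaussianPDFReal_nonneg 0 1 y)]
    apply ENNReal.ofReal_le_ofReal
    rw [gaussianPDFReal]
    push_cast
    rw [mul_one, sub_zero, mul_assoc, ← Real.exp_add, div_eq_inv_mul]
    gcongr
    nlinarith [abs_nonneg t, sq_abs t]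
  calc ENNReal.ofReal (Real.exp (t^2/2 - |t| - 1/2) / Real.sqrt (2*π))
      = (∫⁻ _ in Set.Icc a (a+1), ENNReal.ofReal (Real.exp (t^2/2 - |t| - 1/2) / Real.sqrt (2*π)) ∂volume) := by
        rw [setLIntegral_const, Real.volume_Icc]
        norm_num
    _ ≤ ∫⁻ y in Set.Icc a (a+1), (gaussianPDF 0 1 * fun y => ENNReal.ofReal (Real.exp (t*y))) y ∂volume := by
        exact setLIntegral_mono ((measurable_gaussianPDF 0 1).mul hm) key
    _ ≤ _ := setLIntegral_le_lintegral _ _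

theorem weibull_times_gaussian_heavy_tailed {Ω : Type*} [MeasureSpace Ω]
    [IsProbabilityMeasure (ℙ : Measure Ω)]
    (WE N : Ω → ℝ) (hWE : Measurable WE) (hN : Measurable N)
    (hindep : IndepFun WE N ℙ)
    (hWElaw : Measure.map WE ℙ = volume.withDensity
      (fun x => ENNReal.ofReal (if 0 < x then (1 / 2) * x ^ (-(1 : ℝ) / 2) * exp (-Real.sqrt x) else 0)))
    (hNlaw : Measure.map N ℙ = gaussianReal 0 1) :
    ∀ θ : ℝ, θ ≠ 0 → ∫⁻ ω, ENNReal.ofReal (exp (θ * WE ω * N ω)) ∂ℙ = ⊤ := by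
  intro θ hθ
  have hmap : Measure.map (fun ω => (WE ω, N ω)) ℙ
      = (Measure.map WE ℙ).prod (Measure.map N ℙ) :=
    (indepFun_iff_map_prod_eq_prod_map_map hWE.aemeasurable hN.aemeasurable).mp hindep
  have hfm : Measurable fun p : ℝ × ℝ => ENNReal.ofReal (Real.exp (θ * p.1 * p.2)) := by fun_prop
  have h1 : ∫⁻ ω, ENNReal.ofReal (exp (θ * WE ω * N ω)) ∂ℙ
      = ∫⁻ p : ℝ × ℝ, ENNReal.ofReal (exp (θ * p.1 * p.2))
          ∂((Measure.map WE ℙ).prod (Measure.map N ℙ)) := by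
    rw [← hmap, lintegral_map hfm (hWE.prodMk hN)]
  rw [h1, hWElaw, hNlaw, lintegral_prod _ hfm.aemeasurable]
  set f : ℝ → ℝ≥0∞ := fun x => ENNReal.ofReal
    (if 0 < x then (1 / 2) * x ^ (-(1 : ℝ) / 2) * exp (-Real.sqrt x) else 0) with hfdef
  set G : ℝ → ℝ≥0∞ := fun x => ∫⁻ y, ENNReal.ofReal (exp (θ * x * y)) ∂(gaussianReal 0 1)
    with hGdef
  have hfmeas : Measurable f := by
    apply Measurable.ennreal_ofReal
    have hset : MeasurableSet {x : ℝ | 0 < x} := measurableSet_Ioi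
    exact Measurable.ite hset (by fun_prop) measurable_const
  have hG : Measurable G := hfm.lintegral_prod_right'
  rw [lintegral_withDensity_eq_lintegral_mul volume hfmeas hG]
  have hθ2 : 0 < θ^2/2 := by positivity
  set A : ℝ := max 1 ((|θ| + 8) / (θ^2/2)) with hA
  have hub : ∀ x ∈ Set.Ici A, (1:ℝ≥0∞) ≤ (f * G) x := by
    intro x hx
    have hx1 : (1:ℝ) ≤ x := le_trans (le_max_left _ _) hx
    have hx0 : 0 < x := lt_of_lt_of_le one_pos hx1
    have hx2 : |θ| + 8 ≤ θ^2/2 * x := by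
      rw [← div_le_iff₀' hθ2]
      exact le_trans (le_max_right _ _) hx
    have hsx : 0 < Real.sqrt x := Real.sqrt_pos.mpr hx0
    have hsxx : Real.sqrt x ≤ x := by
      have h := Real.sqrt_le_sqrt (show x ≤ x^2 by nlinarith)
      rwa [Real.sqrt_sq hx0.le] at h
    have hsp : (0:ℝ) < Real.sqrt (2*π) := Real.sqrt_pos.mpr (by positivity)
    have hsp3 : Real.sqrt (2*π) ≤ 3 := by
      have h := Real.sqrt_le_sqrt (show 2*π ≤ 9 by nlinarith [Real.pi_le_four])
      rwa [show Real.sqrt 9 = 3 by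
        rw [show (9:ℝ) = 3^2 by norm_num, Real.sqrt_sq (by norm_num)]] at h
    have hxr : x ^ (-(1:ℝ)/2) = (Real.sqrt x)⁻¹ := by
      rw [show (-(1:ℝ)/2) = -(1/2) by norm_num, Real.rpow_neg hx0.le, ← Real.sqrt_eq_rpow]
    have habs : |θ * x| = |θ| * x := by rw [abs_mul, abs_of_pos hx0]
    have hreal : (1:ℝ) ≤ (1 / 2) * x ^ (-(1:ℝ)/2) * exp (-Real.sqrt x) *
        (exp ((θ*x)^2/2 - |θ * x| - 1/2) / Real.sqrt (2*π)) := by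
      rw [hxr, habs, show (1 / 2) * (Real.sqrt x)⁻¹ * exp (-Real.sqrt x) *
          (exp ((θ*x)^2/2 - |θ| * x - 1/2) / Real.sqrt (2*π))
          = exp ((θ*x)^2/2 - |θ| * x - 1/2) * exp (-Real.sqrt x)
              / (2 * Real.sqrt x * Real.sqrt (2*π)) by field_simp]
      rw [le_div_iff₀ (by positivity), one_mul, ← Real.exp_add, ← sub_eq_add_neg]
      calc 2 * Real.sqrt x * Real.sqrt (2*π) ≤ 2 * x * 3 := by
            apply mul_le_mul _ hsp3 hsp.le (by positivity)
            nlinarith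
        _ = 6*x := by ring
        _ ≤ exp (6*x) := by linarith [Real.add_one_le_exp (6*x)]
        _ ≤ exp ((θ*x)^2/2 - |θ| * x - 1/2 - Real.sqrt x) := by
            apply Real.exp_le_exp.mpr
            nlinarith [mul_le_mul_of_nonneg_right hx2 hx0.le]
    calc (1:ℝ≥0∞) ≤ ENNReal.ofReal ((1 / 2) * x ^ (-(1:ℝ)/2) * exp (-Real.sqrt x) *
          (exp ((θ*x)^2/2 - |θ * x| - 1/2) / Real.sqrt (2*π))) := by
          rw [← ENNReal.ofReal_one]; exact ENNReal.ofReal_le_ofReal hreal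
      _ = ENNReal.ofReal ((1 / 2) * x ^ (-(1:ℝ)/2) * exp (-Real.sqrt x)) *
          ENNReal.ofReal (exp ((θ*x)^2/2 - |θ * x| - 1/2) / Real.sqrt (2*π)) :=
          ENNReal.ofReal_mul (by positivity)
      _ ≤ f x * G x := by
          apply mul_le_mul'
          · simp [hfdef, if_pos hx0]
          · exact inner_gauss_lb (θ*x)
      _ = (f * G) x := rfl
  refine top_unique ?_
  calc (⊤:ℝ≥0∞) = ∫⁻ _ in Set.Ici A, 1 ∂volume := by
        rw [setLIntegral_const, Real.volume_Ici]; simp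
    _ ≤ ∫⁻ x in Set.Ici A, (f * G) x ∂volume := setLIntegral_mono (hfmeas.mul hG) hub
    _ ≤ _ := setLIntegral_le_lintegral _ _
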